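/- arXiv:math/0603147 — 2 statements merged into one kernel-verified Lean document; each statement's English description precedes it below -/
import Mathlib

section
/- Let R be an integral domain and ⋆ a (semi)star operation of finite type on R. If R is ⋆-stable, then every ⋆-maximal ideal M of R is divisorial, i.e., M^v = (R : (R : M)) = M. Consequently ⋆-Max(R) = t-Max(R) = v-Max(R). -/
noncomputable section

section Defs

variable (R K : Type*) [CommRing R] [CommRing K] [Algebra R K]

/-- The residual `(E : F) = {x ∈ K : xF ⊆ E}` of two `R`-submodules of `K`. -/
def resid (E F : Submodule R K) : Submodule R K where
  carrier := {x : K | ∀ y ∈ F, x * y ∈ E}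
  add_mem' := by
    intro a b ha hb y hy
    simpa only [Set.mem_setOf_eq, add_mul] using E.add_mem (ha y hy) (hb y hy)
  zero_mem' := by
    intro y hy
    simp
  smul_mem' := by
    intro c x hx y hy
    simpa [smul_mul_assoc] using E.smul_mem c (hx y hy)

/-- The image of an ideal of `R` as an `R`-submodule of `K`. -/
def idealToSub (I : Ideal R) : Submodule R K :=
  Submodule.map (Algebra.linearMap R K) I

end Defs

/-- A semistar operation on an integral domain `R` with quotient field `K`. -/
structure SemistarOp (R K : Type*) [CommRing R] [Field K] [Algebra R K] where
  star : Submodule R K → Submodule R K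
  star_smul : ∀ x : K, x ≠ 0 → ∀ E : Submodule R K, E ≠ ⊥ →
    star (Submodule.span R {x} * E) = Submodule.span R {x} * star E
  mono : ∀ E F : Submodule R K, E ≠ ⊥ → E ≤ F → star E ≤ star F
  le_star : ∀ E : Submodule R K, E ≠ ⊥ → E ≤ star E
  idem : ∀ E : Submodule R K, E ≠ ⊥ → star (star E) = star E

section Ops

variable (R K : Type*) [CommRing R] [Field K] [Algebra R K]

/-- The `v`-operation (divisorial closure) `E ↦ (R : (R : E))`. -/
def vop (E : Submodule R K) : Submodule R K := resid R K 1 (resid R K 1 E)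

/-- The `t`-operation, the finite-type version of `v`. -/
def top (E : Submodule R K) : Submodule R K :=
  ⨆ (F : Submodule R K) (_ : F.FG ∧ F ≠ ⊥ ∧ F ≤ E), vop R K F

/-- The `w`-operation `E ↦ ⋃ {(E : F) : F f.g. nonzero with F^t = R}`. -/
def wop (E : Submodule R K) : Submodule R K :=
  ⨆ (F : Submodule R K) (_ : F.FG ∧ F ≠ ⊥ ∧ top R K F = 1), resid R K E F

/-- `M` is a maximal proper `f`-closed ideal (e.g. a `⋆`-maximal ideal). -/
def IsOpMaxIdeal (f : Submodule R K → Submodule R K) (M : Submodule R K) : Prop :=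
  M ≠ ⊥ ∧ M < 1 ∧ f M = M ∧
    ∀ J : Submodule R K, J ≠ ⊥ → J < 1 → f J = J → M ≤ J → M = J

/-- The localization `E R_P` of a submodule `E` at a prime `P`, inside `K`. -/
def locSub (P : Ideal R) (E : Submodule R K) : Submodule R K :=
  Submodule.span R {x : K | ∃ s : R, s ∉ P ∧ s • x ∈ E}

/-- The subring of `K` determined by the submodule `T` is a stable domain:
every nonzero ideal `E` of `T` is invertible in `(E : E)`. -/
def SubringStable (T : Submodule R K) : Prop :=
  ∀ E : Submodule R K, E ≠ ⊥ → E ≤ T → T * E ≤ E →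
    E * resid R K (resid R K E E) E = resid R K E E

/-- The subring of `K` determined by `T` is a divisorial domain: every nonzero
fractional ideal of `T` is divisorial. -/
def SubringDivisorial (T : Submodule R K) : Prop :=
  ∀ J : Submodule R K, J ≠ ⊥ → T * J ≤ J →
    (∃ x : K, x ≠ 0 ∧ ∀ y ∈ J, x * y ∈ T) →
    resid R K T (resid R K T J) = J

/-- The subring of `K` determined by `T` is `v`-coherent: for every nonzero
finitely generated ideal `I = S·T` of `T`, the ideal `(T : I)` is `v`-finite. -/
def SubringVCoherent (T : Submodule R K) : Prop :=
  ∀ S : Submodule R K, S.FG → S ≠ ⊥ → S ≤ T →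
    ∃ H : Submodule R K, H.FG ∧ H ≠ ⊥ ∧
      resid R K T (S * T) = resid R K T (resid R K T (H * T))

/-- `R` has finite character with respect to the maximal ideals singled out by `f`. -/
def OpFiniteCharacter (f : Submodule R K → Submodule R K) : Prop :=
  ∀ I : Submodule R K, I ≠ ⊥ → I ≤ 1 →
    {M : Submodule R K | IsOpMaxIdeal R K f M ∧ I ≤ M}.Finite

/-- Every nonzero finitely generated ideal is `t`-invertible (PvMD). -/
def IsPvMDsub : Prop :=
  ∀ G : Submodule R K, G.FG → G ≠ ⊥ → G ≤ 1 →
    top R K (G * resid R K 1 G) = 1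

end Ops

namespace SemistarOp

variable {R K : Type*} [CommRing R] [Field K] [Algebra R K] (s : SemistarOp R K)

/-- `⋆`-stability for the ideals of the subring determined by `T`. -/
def StarStableOver (T : Submodule R K) : Prop :=
  ∀ E : Submodule R K, E ≠ ⊥ → E ≤ T → T * E ≤ E →
    s.star (s.star E * resid R K (resid R K (s.star E) (s.star E)) (s.star E))
      = resid R K (s.star E) (s.star E)

/-- `R` is `⋆`-stable: each nonzero ideal `I` is such that `I^⋆` is
`⋆̇`-invertible in `(I^⋆ : I^⋆)`. -/
def StarStable : Prop := s.StarStableOver (1 : Submodule R K)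

/-- `⋆` is of finite type. -/
def FinType : Prop :=
  ∀ E : Submodule R K, E ≠ ⊥ →
    s.star E = ⨆ (F : Submodule R K) (_ : F.FG ∧ F ≠ ⊥ ∧ F ≤ E), s.star F

/-- `⋆ = ⋆̃`: the operation is spectral and of finite type, i.e. it is given by
`E^⋆ = ⋃ {(E : F) : F f.g. nonzero with F^⋆ = R}`. -/
def IsSpectralFT : Prop :=
  ∀ E : Submodule R K, E ≠ ⊥ →
    s.star E = ⨆ (F : Submodule R K) (_ : F.FG ∧ F ≠ ⊥ ∧ s.star F = 1), resid R K E F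

/-- The `⋆`-integral closure `R^{[⋆]} = ⋃ {(F^⋆ : F^⋆) : F f.g. nonzero}`. -/
def starIntClosure : Submodule R K :=
  ⨆ (F : Submodule R K) (_ : F.FG ∧ F ≠ ⊥), resid R K (s.star F) (s.star F)

end SemistarOp


section MoreOps

variable (R K : Type*) [CommRing R] [Field K] [Algebra R K]

/-- `R` is `w`-stable: for each nonzero ideal `I`, `I^w` is invertible in
`(I^w : I^w)` with respect to the restriction of `w`. -/
def WStable : Prop :=
  ∀ I : Submodule R K, I ≠ ⊥ → I ≤ 1 →
    wop R K (wop R K I * resid R K (resid R K (wop R K I) (wop R K I)) (wop R K I))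
      = resid R K (wop R K I) (wop R K I)

/-- `R` is completely integrally closed in its quotient field `K`. -/
def CICsub : Prop :=
  ∀ x : K, (∃ c : R, c ≠ 0 ∧ ∀ n : ℕ, c • x ^ n ∈ (1 : Submodule R K)) →
    x ∈ (1 : Submodule R K)

/-- `R` is `w`-divisorial: `w = v` on nonzero fractional ideals. -/
def WDivisorial : Prop :=
  ∀ J : Submodule R K, J ≠ ⊥ →
    (∃ d : R, d ≠ 0 ∧ ∀ x ∈ J, d • x ∈ (1 : Submodule R K)) →
    wop R K J = vop R K J

/-- `R` is a Krull domain: completely integrally closed with the ascending chain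
condition on (integral) divisorial ideals. -/
def IsKrullSub : Prop :=
  CICsub R K ∧
    ∀ c : ℕ → Submodule R K,
      (∀ n, c n ≠ ⊥ ∧ c n ≤ 1 ∧ vop R K (c n) = c n) → Monotone c →
        ∃ n, ∀ m, n ≤ m → c m = c n

end MoreOps

end

section Aux

variable {R K : Type*} [CommRing R] [Field K] [Algebra R K]

lemma mem_resid {E F : Submodule R K} {x : K} :
    x ∈ resid R K E F ↔ ∀ y ∈ F, x * y ∈ E := Iff.rfl

lemma resid_mono_left {E E' F : Submodule R K} (h : E ≤ E') :
    resid R K E F ≤ resid R K E' F :=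
  fun _ hx y hy => h (hx y hy)

lemma resid_anti_right {E F F' : Submodule R K} (h : F ≤ F') :
    resid R K E F' ≤ resid R K E F :=
  fun _ hx y hy => hx y (h hy)

lemma resid_one_one : resid R K 1 1 = (1 : Submodule R K) := by
  apply le_antisymm
  · intro x hx
    simpa using hx 1 (Submodule.one_le.mp le_rfl)
  · intro x hx y hy
    obtain ⟨r, rfl⟩ := (Submodule.mem_one).mp hx
    obtain ⟨u, rfl⟩ := (Submodule.mem_one).mp hy
    rw [← map_mul]
    exact Submodule.algebraMap_mem _

lemma le_vop (E : Submodule R K) : E ≤ vop R K E := by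
  intro x hx y hy
  rw [mul_comm]
  exact hy x hx

lemma vop_mono {E F : Submodule R K} (h : E ≤ F) : vop R K E ≤ vop R K F :=
  resid_anti_right (resid_anti_right h)

lemma resid_one_vop (E : Submodule R K) :
    resid R K 1 (vop R K E) = resid R K 1 E := by
  apply le_antisymm
  · exact resid_anti_right (le_vop E)
  · exact le_vop (resid R K 1 E)

lemma vop_vop (E : Submodule R K) : vop R K (vop R K E) = vop R K E := by
  show resid R K 1 (resid R K 1 (vop R K E)) = vop R K E
  rw [resid_one_vop]
  rfl

lemma one_le_resid_one {E : Submodule R K} (h : E ≤ 1) : 1 ≤ resid R K 1 E := by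
  intro x hx y hy
  obtain ⟨r, rfl⟩ := (Submodule.mem_one).mp hx
  obtain ⟨u, rfl⟩ := (Submodule.mem_one).mp (h hy)
  rw [← map_mul]
  exact Submodule.algebraMap_mem _

lemma vop_le_one {E : Submodule R K} (h : E ≤ 1) : vop R K E ≤ 1 :=
  le_trans (resid_anti_right (one_le_resid_one h)) resid_one_one.le

lemma one_le_resid_self (E : Submodule R K) : 1 ≤ resid R K E E := by
  intro x hx y hy
  obtain ⟨r, rfl⟩ := (Submodule.mem_one).mp hx
  rw [← Algebra.smul_def]
  exact E.smul_mem r hy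

lemma vop_ne_bot {E : Submodule R K} (h : E ≠ ⊥) : vop R K E ≠ ⊥ := by
  intro hb
  exact h (le_bot_iff.mp (hb ▸ le_vop E))

lemma star_le_vop (s : SemistarOp R K) (hone : s.star 1 = 1)
    {E : Submodule R K} (hE : E ≠ ⊥) : s.star E ≤ vop R K E := by
  intro x hx y hy
  by_cases hy0 : y = 0
  · simp [hy0]
  · have hle : Submodule.span R {y} * E ≤ 1 := by
      rw [Submodule.mul_le]
      intro a ha b hb
      obtain ⟨c, rfl⟩ := Submodule.mem_span_singleton.mp ha
      rw [smul_mul_assoc]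
      exact Submodule.smul_mem _ c (hy b hb)
    have hbot : Submodule.span R {y} * E ≠ ⊥ := by
      obtain ⟨e, he, he0⟩ := (Submodule.ne_bot_iff E).mp hE
      intro hb
      have : y * e ∈ Submodule.span R {y} * E :=
        Submodule.mul_mem_mul (Submodule.mem_span_singleton_self y) he
      rw [hb, Submodule.mem_bot] at this
      exact mul_ne_zero hy0 he0 this
    have h1 : s.star (Submodule.span R {y} * E) ≤ 1 := by
      have := s.mono _ _ hbot hle
      rwa [hone] at this
    rw [s.star_smul y hy0 E hE] at h1
    have : y * x ∈ Submodule.span R {y} * s.star E :=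
      Submodule.mul_mem_mul (Submodule.mem_span_singleton_self y) hx
    rw [mul_comm]
    exact h1 this

lemma stab_contra (s : SemistarOp R K) (hst : s.StarStable)
    {J : Submodule R K} (hJ0 : J ≠ ⊥) (hJlt : J < 1) (hJs : s.star J = J)
    (hJv : vop R K J = 1) : False := by
  have h1 : resid R K 1 J = 1 := by
    have h := resid_one_vop (R := R) (K := K) J
    rw [hJv, resid_one_one] at h
    exact h.symm
  have h2 : resid R K J J = 1 :=
    le_antisymm (le_trans (resid_mono_left hJlt.le) h1.le) (one_le_resid_self J)
  have h3 := hst J hJ0 hJlt.le (by rw [one_mul])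
  rw [hJs, h2, h1, mul_one, hJs] at h3
  exact hJlt.ne h3

lemma le_topop (E : Submodule R K) : E ≤ top R K E := by
  intro x hx
  by_cases hx0 : x = 0
  · simp [hx0]
  · have hle : vop R K (Submodule.span R {x}) ≤ top R K E :=
      le_iSup_of_le (Submodule.span R {x})
        (le_iSup_of_le ⟨Submodule.fg_span_singleton x,
          by simpa [Submodule.span_singleton_eq_bot] using hx0,
          Submodule.span_le.mpr (Set.singleton_subset_iff.mpr hx)⟩ le_rfl)
    exact hle (le_vop _ (Submodule.mem_span_singleton_self x))

lemma top_le_vop (E : Submodule R K) : top R K E ≤ vop R K E :=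
  iSup_le fun F => iSup_le fun hF => vop_mono hF.2.2

lemma star_le_top (s : SemistarOp R K) (hone : s.star 1 = 1) (hft : s.FinType)
    {E : Submodule R K} (hE : E ≠ ⊥) : s.star E ≤ top R K E := by
  rw [hft E hE]
  refine iSup_le fun F => iSup_le fun hF => ?_
  exact le_trans (star_le_vop s hone hF.2.1)
    (le_iSup_of_le F (le_iSup_of_le hF le_rfl))

lemma star_eq_of_top (s : SemistarOp R K) (hone : s.star 1 = 1) (hft : s.FinType)
    {J : Submodule R K} (hJ0 : J ≠ ⊥) (hJt : top R K J = J) : s.star J = J :=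
  le_antisymm (le_trans (star_le_top s hone hft hJ0) hJt.le) (s.le_star J hJ0)

lemma top_vop (E : Submodule R K) : top R K (vop R K E) = vop R K E :=
  le_antisymm (le_trans (top_le_vop _) (vop_vop E).le) (le_topop _)

end Aux

/-- if `⋆` is a (semi)star operation of finite type and `R` is
`⋆`-stable, then every `⋆`-maximal ideal is divisorial; consequently
`⋆-Max(R) = t-Max(R) = v-Max(R)`. -/
theorem statement_6 {R K : Type*} [CommRing R] [IsDomain R] [Field K] [Algebra R K]
    [IsFractionRing R K] (s : SemistarOp R K) (hone : s.star 1 = 1)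
    (hft : s.FinType) (hst : s.StarStable) :
    (∀ M : Submodule R K, IsOpMaxIdeal R K s.star M → vop R K M = M) ∧
    (∀ M : Submodule R K, IsOpMaxIdeal R K s.star M ↔ IsOpMaxIdeal R K (top R K) M) ∧
    (∀ M : Submodule R K, IsOpMaxIdeal R K (top R K) M ↔ IsOpMaxIdeal R K (vop R K) M) := by
  have part1 : ∀ M : Submodule R K, IsOpMaxIdeal R K s.star M → vop R K M = M := by
    rintro M ⟨hM0, hMlt, hMs, hMmax⟩
    by_cases hv : vop R K M = 1
    · exact (stab_contra s hst hM0 hMlt hMs hv).elim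
    · have hvlt : vop R K M < 1 := lt_of_le_of_ne (vop_le_one hMlt.le) hv
      have hvb : vop R K M ≠ ⊥ := vop_ne_bot hM0
      have hvs : s.star (vop R K M) = vop R K M :=
        le_antisymm (le_trans (star_le_vop s hone hvb) (vop_vop M).le) (s.le_star _ hvb)
      exact (hMmax (vop R K M) hvb hvlt hvs (le_vop M)).symm
  have part2 : ∀ M : Submodule R K,
      IsOpMaxIdeal R K s.star M ↔ IsOpMaxIdeal R K (top R K) M := by
    intro M
    constructor
    · intro hM
      obtain ⟨hM0, hMlt, hMs, hMmax⟩ := hM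
      have hMv := part1 M ⟨hM0, hMlt, hMs, hMmax⟩
      refine ⟨hM0, hMlt, le_antisymm (le_trans (top_le_vop M) hMv.le) (le_topop M), ?_⟩
      intro J hJ0 hJlt hJt hMJ
      exact hMmax J hJ0 hJlt (star_eq_of_top s hone hft hJ0 hJt) hMJ
    · rintro ⟨hM0, hMlt, hMt, hMmax⟩
      refine ⟨hM0, hMlt, star_eq_of_top s hone hft hM0 hMt, ?_⟩
      intro J hJ0 hJlt hJs hMJ
      by_cases hv : vop R K J = 1
      · exact (stab_contra s hst hJ0 hJlt hJs hv).elim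
      · have hvlt : vop R K J < 1 := lt_of_le_of_ne (vop_le_one hJlt.le) hv
        have heq := hMmax (vop R K J) (vop_ne_bot hJ0) hvlt (top_vop J)
          (le_trans hMJ (le_vop J))
        exact le_antisymm hMJ (by rw [heq]; exact le_vop J)
  refine ⟨part1, part2, ?_⟩
  intro M
  constructor
  · intro hM
    have hMs := (part2 M).mpr hM
    obtain ⟨hM0, hMlt, hMt, hMmax⟩ := hM
    have hMv := part1 M hMs
    refine ⟨hM0, hMlt, hMv, ?_⟩
    intro J hJ0 hJlt hJv hMJ
    have hJt : top R K J = J := le_antisymm (le_trans (top_le_vop J) hJv.le) (le_topop J)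
    exact hMmax J hJ0 hJlt hJt hMJ
  · rintro ⟨hM0, hMlt, hMv, hMmax⟩
    refine ⟨hM0, hMlt, le_antisymm (le_trans (top_le_vop M) hMv.le) (le_topop M), ?_⟩
    intro J hJ0 hJlt hJt hMJ
    have hJs := star_eq_of_top s hone hft hJ0 hJt
    by_cases hv : vop R K J = 1
    · exact (stab_contra s hst hJ0 hJlt hJs hv).elim
    · have hvlt : vop R K J < 1 := lt_of_le_of_ne (vop_le_one hJlt.le) hv
      have heq := hMmax (vop R K J) (vop_ne_bot hJ0) hvlt (vop_vop J)
        (le_trans hMJ (le_vop J))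
      exact le_antisymm hMJ (by rw [heq]; exact le_vop J)
end

section
/- Let R be an integral domain and ⋆ a semistar operation of finite type on R. If R is ⋆-stable and ⋆-integrally closed (R^{[⋆]} = R), then R is a Prüfer v-multiplication domain and ⋆ = t = w on R. -/
/-!
Since `R^{[⋆]} = R`, the ring `(F^⋆ : F^⋆)` is `R` for every nonzero finitely generated `F`,
and then `⋆`-stability of an integral such `F` says that `F` is `⋆`-invertible:
`(F F⁻¹)^⋆ = R`; rescaling by a common denominator extends this to every nonzero finitely
generated `F`. A `⋆`-invertible `F` satisfies `F^⋆ = F^v`, so the finite-type operation `⋆`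
is `t`, and `t`-invertibility of finitely generated ideals is the PvMD property. Finally, for
finitely generated `G ⊆ E`, finite type yields a finitely generated `H ⊆ G G⁻¹` with
`H^t = R`, and `G^t H ⊆ G ⊆ E` places `G^t` inside `E^w`.
-/

open Submodule

section Residual

variable {R K : Type*} [CommRing R] [Field K] [Algebra R K]

lemma le_resid_iff {E F G : Submodule R K} : G ≤ resid R K E F ↔ G * F ≤ E :=
  ⟨fun h => mul_le.2 fun _ hm _ hn => h hm _ hn, fun h _ hm _ hn => h (mul_mem_mul hm hn)⟩

lemma resid_mul_le (E F : Submodule R K) : resid R K E F * F ≤ E :=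
  le_resid_iff.1 le_rfl

lemma mul_resid_le (E F : Submodule R K) : F * resid R K E F ≤ E := by
  rw [mul_comm]; exact resid_mul_le E F

lemma resid_one_right (E : Submodule R K) : resid R K E 1 = E := by
  refine le_antisymm (fun x hx => by simpa using hx 1 (one_le.1 le_rfl)) (le_resid_iff.2 ?_)
  rw [mul_one]

lemma mul_ne_bot {E F : Submodule R K} (hE : E ≠ ⊥) (hF : F ≠ ⊥) : E * F ≠ ⊥ := by
  obtain ⟨x, hx, hx0⟩ := (Submodule.ne_bot_iff _).1 hE
  obtain ⟨y, hy, hy0⟩ := (Submodule.ne_bot_iff _).1 hF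
  exact (Submodule.ne_bot_iff _).2 ⟨x * y, mul_mem_mul hx hy, mul_ne_zero hx0 hy0⟩

lemma span_singleton_ne_bot {x : K} (hx : x ≠ 0) : span R {x} ≠ ⊥ :=
  mt span_singleton_eq_bot.1 hx

lemma span_singleton_inv_mul_cancel {c : K} (hc : c ≠ 0) :
    span R {c⁻¹} * span R {c} = 1 := by
  rw [span_mul_span, Set.singleton_mul_singleton, inv_mul_cancel₀ hc, one_eq_span]

lemma resid_one_span_singleton_mul {c : K} (hc : c ≠ 0) (E : Submodule R K) :
    resid R K 1 (span R {c} * E) = span R {c⁻¹} * resid R K 1 E := by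
  refine le_antisymm (fun x hx => mem_span_singleton_mul.2 ⟨c * x, fun y hy => ?_, ?_⟩) ?_
  · simpa only [mul_assoc, mul_left_comm c x y] using
      hx _ (mul_mem_mul (mem_span_singleton_self c) hy)
  · rw [← mul_assoc, inv_mul_cancel₀ hc, one_mul]
  · refine le_resid_iff.2 ?_
    calc span R {c⁻¹} * resid R K 1 E * (span R {c} * E)
        = span R {c⁻¹} * span R {c} * (resid R K 1 E * E) := by ring
      _ ≤ 1 := by rw [span_singleton_inv_mul_cancel hc, one_mul]; exact resid_mul_le 1 E

lemma span_singleton_mul_mul_resid_one {c : K} (hc : c ≠ 0) (F : Submodule R K) :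
    span R {c} * F * resid R K 1 (span R {c} * F) = F * resid R K 1 F := by
  rw [resid_one_span_singleton_mul hc,
    show span R {c} * F * (span R {c⁻¹} * resid R K 1 F)
      = span R {c⁻¹} * span R {c} * (F * resid R K 1 F) by ring,
    span_singleton_inv_mul_cancel hc, one_mul]

variable [IsFractionRing R K]

lemma exists_span_singleton_mul_le_one {F : Submodule R K} (hF : F.FG) :
    ∃ c : K, c ≠ 0 ∧ span R {c} * F ≤ 1 := by
  obtain ⟨t, rfl⟩ := hF
  obtain ⟨b, hb⟩ := IsLocalization.exist_integer_multiples_of_finset (nonZeroDivisors R) (S := K) t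
  refine ⟨algebraMap R K b, (IsLocalization.map_units K b).ne_zero, ?_⟩
  rw [span_mul_span, span_le]
  rintro _ ⟨_, rfl, a, ha, rfl⟩
  obtain ⟨r, hr⟩ := hb a ha
  exact mem_one.2 ⟨r, by rw [hr, Algebra.smul_def]⟩

lemma resid_one_ne_bot {F : Submodule R K} (hF : F.FG) : resid R K 1 F ≠ ⊥ := by
  obtain ⟨c, hc, hcF⟩ := exists_span_singleton_mul_le_one hF
  exact fun h => span_singleton_ne_bot (R := R) hc (le_bot_iff.1 (h ▸ le_resid_iff.2 hcF))

end Residual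

namespace SemistarOp

variable {R K : Type*} [CommRing R] [Field K] [Algebra R K] (s : SemistarOp R K)

lemma star_ne_bot {E : Submodule R K} (hE : E ≠ ⊥) : s.star E ≠ ⊥ :=
  fun h => hE (le_bot_iff.1 (h ▸ s.le_star E hE))

lemma resid_le_resid_star (A : Submodule R K) {B : Submodule R K} (hB : B ≠ ⊥) :
    resid R K A B ≤ resid R K (s.star A) (s.star B) := by
  intro x hx
  rcases eq_or_ne x 0 with rfl | hx0
  · exact zero_mem _
  have hxB : span R {x} * B ≤ A := le_resid_iff.1 (span_singleton_le_iff_mem _ _ |>.2 hx)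
  have := s.mono _ _ (mul_ne_bot (span_singleton_ne_bot hx0) hB) hxB
  rw [s.star_smul x hx0 B hB] at this
  exact fun y hy => this (mul_mem_mul (mem_span_singleton_self x) hy)

lemma resid_le_star (E : Submodule R K) {F : Submodule R K} (hF : F ≠ ⊥) (h : s.star F = 1) :
    resid R K E F ≤ s.star E := by
  simpa only [h, resid_one_right] using s.resid_le_resid_star E hF

lemma star_mul_le {A : Submodule R K} (hA : A ≠ ⊥) (B : Submodule R K) :
    s.star A * B ≤ s.star (A * B) := by
  rw [mul_comm, ← le_resid_iff]
  have hB : B ≤ resid R K (A * B) A := le_resid_iff.2 (mul_comm A B ▸ le_rfl)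
  exact hB.trans (s.resid_le_resid_star _ hA)

lemma resid_star_self_le_starIntClosure {F : Submodule R K} (hF : F.FG) (hF0 : F ≠ ⊥) :
    resid R K (s.star F) (s.star F) ≤ s.starIntClosure :=
  le_iSup₂ (f := fun F (_ : F.FG ∧ F ≠ ⊥) => resid R K (s.star F) (s.star F)) F ⟨hF, hF0⟩

lemma star_one (hic : s.starIntClosure = 1) : s.star 1 = 1 := by
  have h1 : (1 : Submodule R K) ≠ ⊥ := (Submodule.ne_bot_iff _).2 ⟨1, one_le.1 le_rfl, one_ne_zero⟩
  refine le_antisymm ?_ (s.le_star 1 h1)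
  calc s.star 1 = resid R K (s.star 1) 1 := (resid_one_right _).symm
    _ ≤ resid R K (s.star (s.star 1)) (s.star 1) := s.resid_le_resid_star _ h1
    _ ≤ s.starIntClosure := by
      rw [s.idem 1 h1]
      exact s.resid_star_self_le_starIntClosure
        (one_eq_span (R := R) (A := K) ▸ fg_span_singleton 1) h1
    _ = 1 := hic

lemma resid_one_star (h1 : s.star 1 = 1) {E : Submodule R K} (hE : E ≠ ⊥) :
    resid R K 1 (s.star E) = resid R K 1 E := by
  refine le_antisymm (fun x hx y hy => hx y (s.le_star E hE hy)) ?_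
  simpa only [h1] using s.resid_le_resid_star 1 hE

lemma star_le_vop (h1 : s.star 1 = 1) {E : Submodule R K} (hE : E ≠ ⊥) :
    s.star E ≤ vop R K E := by
  rw [vop, le_resid_iff, ← s.resid_one_star h1 hE]
  exact mul_resid_le 1 _

lemma vop_le_star {F : Submodule R K} (hF : F * resid R K 1 F ≠ ⊥)
    (h : s.star (F * resid R K 1 F) = 1) : vop R K F ≤ s.star F := by
  refine le_trans ?_ (s.resid_le_star F hF h)
  rw [vop, le_resid_iff]
  calc resid R K 1 (resid R K 1 F) * (F * resid R K 1 F)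
      = F * (resid R K 1 (resid R K 1 F) * resid R K 1 F) := by ring
    _ ≤ F * 1 := mul_le_mul_right (resid_mul_le 1 _) F
    _ = F := mul_one F

lemma exists_fg_le_of_mem_star (hft : s.FinType) {Q : Submodule R K} (hQ : Q ≠ ⊥) {x : K}
    (hx : x ∈ s.star Q) : ∃ F : Submodule R K, F.FG ∧ F ≠ ⊥ ∧ F ≤ Q ∧ x ∈ s.star F := by
  rw [hft Q hQ, iSup_subtype' (p := fun F : Submodule R K => F.FG ∧ F ≠ ⊥ ∧ F ≤ Q)] at hx
  obtain ⟨q, hq, hq0⟩ := (Submodule.ne_bot_iff _).1 hQ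
  have : Nonempty {F : Submodule R K // F.FG ∧ F ≠ ⊥ ∧ F ≤ Q} :=
    ⟨⟨span R {q}, fg_span_singleton q, span_singleton_ne_bot hq0,
      (span_singleton_le_iff_mem _ _).2 hq⟩⟩
  have hdir : Directed (· ≤ ·)
      (fun F : {F : Submodule R K // F.FG ∧ F ≠ ⊥ ∧ F ≤ Q} => s.star F.1) := by
    rintro ⟨F₁, hF₁, hF₁0, hF₁Q⟩ ⟨F₂, hF₂, -, hF₂Q⟩
    exact ⟨⟨F₁ ⊔ F₂, hF₁.sup hF₂, fun h => hF₁0 (eq_bot_iff.2 (h ▸ le_sup_left)),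
      sup_le hF₁Q hF₂Q⟩, s.mono _ _ hF₁0 le_sup_left, s.mono _ _ ‹_› le_sup_right⟩
  obtain ⟨⟨F, hF, hF0, hFQ⟩, hxF⟩ := (mem_iSup_of_directed _ hdir).1 hx
  exact ⟨F, hF, hF0, hFQ, hxF⟩

variable [IsFractionRing R K]

lemma star_mul_resid_one_of_le_one (hic : s.starIntClosure = 1) (hst : s.StarStable)
    {F : Submodule R K} (hF : F.FG) (hF0 : F ≠ ⊥) (hF1 : F ≤ 1) :
    s.star (F * resid R K 1 F) = 1 := by
  have h1 := s.star_one hic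
  have hFF : F * resid R K 1 F ≠ ⊥ := mul_ne_bot hF0 (resid_one_ne_bot hF)
  have hsF : s.star F * resid R K 1 F ≠ ⊥ := mul_ne_bot (s.star_ne_bot hF0) (resid_one_ne_bot hF)
  have hinv : s.star (s.star F * resid R K 1 F) = 1 := by
    have := hst F hF0 hF1 (by rw [one_mul])
    have hself : resid R K (s.star F) (s.star F) = 1 :=
      le_antisymm (hic ▸ s.resid_star_self_le_starIntClosure hF hF0)
        (le_resid_iff.2 (one_mul (s.star F)).le)
    rwa [hself, s.resid_one_star h1 hF0] at this
  refine le_antisymm (by simpa only [h1] using s.mono _ _ hFF (mul_resid_le 1 F)) ?_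
  calc 1 = s.star (s.star F * resid R K 1 F) := hinv.symm
    _ ≤ s.star (s.star (F * resid R K 1 F)) := s.mono _ _ hsF (s.star_mul_le hF0 _)
    _ = s.star (F * resid R K 1 F) := s.idem _ hFF

lemma star_mul_resid_one (hic : s.starIntClosure = 1) (hst : s.StarStable)
    {F : Submodule R K} (hF : F.FG) (hF0 : F ≠ ⊥) : s.star (F * resid R K 1 F) = 1 := by
  obtain ⟨c, hc, hcF⟩ := exists_span_singleton_mul_le_one hF
  rw [← span_singleton_mul_mul_resid_one hc F]
  exact s.star_mul_resid_one_of_le_one hic hst ((fg_span_singleton c).mul hF)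
    (mul_ne_bot (span_singleton_ne_bot hc) hF0) hcF

lemma star_eq_vop (hic : s.starIntClosure = 1) (hst : s.StarStable)
    {F : Submodule R K} (hF : F.FG) (hF0 : F ≠ ⊥) : s.star F = vop R K F :=
  le_antisymm (s.star_le_vop (s.star_one hic) hF0)
    (s.vop_le_star (mul_ne_bot hF0 (resid_one_ne_bot hF)) (s.star_mul_resid_one hic hst hF hF0))

lemma star_eq_top (hft : s.FinType) (hic : s.starIntClosure = 1) (hst : s.StarStable)
    {E : Submodule R K} (hE : E ≠ ⊥) : s.star E = top R K E := by
  rw [hft E hE]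
  exact iSup_congr fun F => iSup_congr fun hF => s.star_eq_vop hic hst hF.1 hF.2.1

lemma star_le_wop (hft : s.FinType) (hic : s.starIntClosure = 1) (hst : s.StarStable)
    {E : Submodule R K} (hE : E ≠ ⊥) : s.star E ≤ wop R K E := by
  rw [hft E hE]
  refine iSup₂_le fun G ⟨hG, hG0, hGE⟩ => ?_
  have hGG : G * resid R K 1 G ≠ ⊥ := mul_ne_bot hG0 (resid_one_ne_bot hG)
  have hone : (1 : K) ∈ s.star (G * resid R K 1 G) := by
    rw [s.star_mul_resid_one hic hst hG hG0]; exact one_le.1 le_rfl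
  obtain ⟨H, hH, hH0, hHG, hH1⟩ := s.exists_fg_le_of_mem_star hft hGG hone
  have hHstar : s.star H = 1 :=
    le_antisymm (s.star_one hic ▸ s.mono _ _ hH0 (hHG.trans (mul_resid_le 1 G))) (one_le.2 hH1)
  have hGH : s.star G * H ≤ E := calc
    s.star G * H ≤ s.star G * (G * resid R K 1 G) := mul_le_mul_right hHG _
    _ = G * (s.star G * resid R K 1 (s.star G)) := by
      rw [s.resid_one_star (s.star_one hic) hG0]; ring
    _ ≤ G * 1 := mul_le_mul_right (mul_resid_le 1 _) G
    _ = G := mul_one G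
    _ ≤ E := hGE
  refine (le_resid_iff.2 hGH).trans ?_
  exact le_iSup₂ (f := fun F (_ : F.FG ∧ F ≠ ⊥ ∧ top R K F = 1) => resid R K E F) H
    ⟨hH, hH0, s.star_eq_top hft hic hst hH0 ▸ hHstar⟩

lemma wop_le_star (hft : s.FinType) (hic : s.starIntClosure = 1) (hst : s.StarStable)
    (E : Submodule R K) : wop R K E ≤ s.star E :=
  iSup₂_le fun _ ⟨_, hF0, hF1⟩ =>
    s.resid_le_star E hF0 (s.star_eq_top hft hic hst hF0 ▸ hF1)

end SemistarOp

theorem statement_13_general {R K : Type*} [CommRing R] [Field K] [Algebra R K]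
    [IsFractionRing R K] (s : SemistarOp R K) (hft : s.FinType)
    (hst : s.StarStable) (hic : s.starIntClosure = 1) :
    IsPvMDsub R K ∧
      ∀ E : Submodule R K, E ≠ ⊥ → s.star E = top R K E ∧ top R K E = wop R K E := by
  refine ⟨fun G hG hG0 _ => ?_, fun E hE => ⟨s.star_eq_top hft hic hst hE, ?_⟩⟩
  · rw [← s.star_eq_top hft hic hst (mul_ne_bot hG0 (resid_one_ne_bot hG))]
    exact s.star_mul_resid_one hic hst hG hG0
  · rw [← s.star_eq_top hft hic hst hE]
    exact le_antisymm (s.star_le_wop hft hic hst hE) (s.wop_le_star hft hic hst E)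

/-- if `⋆` is a semistar operation of finite type and `R` is
`⋆`-stable and `⋆`-integrally closed, then `R` is a PvMD and `⋆ = t = w`. -/
theorem statement_13 {R K : Type*} [CommRing R] [IsDomain R] [Field K] [Algebra R K]
    [IsFractionRing R K] (s : SemistarOp R K) (hft : s.FinType)
    (hst : s.StarStable) (hic : s.starIntClosure = 1) :
    IsPvMDsub R K ∧
      ∀ E : Submodule R K, E ≠ ⊥ → s.star E = top R K E ∧ top R K E = wop R K E :=
  statement_13_general s hft hst hic
end
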